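/- With C_β = (2 sin β + sin 2β)·((π − 2β)/4 + (1/3)tan³(β/2) + tan(β/2)) for β ∈ (0, π/2], there exist a strictly decreasing sequence (β_j)_{j ≥ 1} of real numbers in (0, π/2) with β_j → 0 and a strictly increasing sequence of integers m_j ≥ 3 such that C_{β_j} = 2 − 2cos(π/m_j) for every j. -/
import Mathlib


open Filter

noncomputable section

/-- The drift coefficient `C_β = (2 sin β + sin 2β)·((π − 2β)/4 + (1/3)tan³(β/2) + tan(β/2))`. -/
def Cconst (β : ℝ) : ℝ :=
  (2 * Real.sin β + Real.sin (2 * β)) *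
    ((Real.pi - 2 * β) / 4 + (1 / 3) * Real.tan (β / 2) ^ 3 + Real.tan (β / 2))

namespace Stmt9Aux

lemma contC {y : ℝ} (h0 : 0 ≤ y) (h1 : y ≤ Real.pi / 2) : ContinuousAt Cconst y := by
  have hpi := Real.pi_pos
  have hc : Real.cos (y / 2) ≠ 0 := by
    apply ne_of_gt
    apply Real.cos_pos_of_mem_Ioo
    constructor <;> [linarith; linarith]
  have hdiv : ContinuousAt (fun β : ℝ => β / 2) y := continuousAt_id.div_const 2
  have ht : ContinuousAt (fun β : ℝ => Real.tan (β / 2)) y :=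
    ContinuousAt.comp (g := Real.tan) (Real.continuousAt_tan.mpr hc) hdiv
  unfold Cconst
  apply ContinuousAt.mul
  · fun_prop
  · exact (((by fun_prop : ContinuousAt (fun β : ℝ => (Real.pi - 2 * β) / 4) y).add
      (continuousAt_const.mul (ht.pow 3))).add ht)

lemma lowerC {β : ℝ} (h0 : 0 < β) (h1 : β ≤ Real.pi / 2) : β ≤ Cconst β := by
  have hpi := Real.pi_pos
  have hA : 4 / Real.pi * β ≤ 2 * Real.sin β + Real.sin (2 * β) := by
    have h2 : 2 / Real.pi * β ≤ Real.sin β := Real.mul_le_sin h0.le h1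
    have h3 : 0 ≤ Real.sin (2 * β) :=
      Real.sin_nonneg_of_nonneg_of_le_pi (by linarith) (by linarith)
    have h4 : 4 / Real.pi * β = 2 * (2 / Real.pi * β) := by ring
    linarith
  have htan : β / 2 ≤ Real.tan (β / 2) := (Real.lt_tan (by linarith) (by linarith)).le
  have htan0 : 0 ≤ Real.tan (β / 2) := le_trans (by linarith) htan
  have hB : Real.pi / 4 ≤ (Real.pi - 2 * β) / 4 + (1 / 3) * Real.tan (β / 2) ^ 3
      + Real.tan (β / 2) := by
    nlinarith [pow_nonneg htan0 3]
  have hA0 : 0 ≤ 4 / Real.pi * β := by positivity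
  calc β = (4 / Real.pi * β) * (Real.pi / 4) := by field_simp
    _ ≤ _ := mul_le_mul hA hB (by positivity) (le_trans hA0 hA)

lemma upperC {β : ℝ} (h0 : 0 < β) (h1 : β ≤ Real.pi / 2) : Cconst β ≤ 12 * β := by
  have hpi := Real.pi_pos
  have hpi4 : Real.pi < 4 := lt_trans Real.pi_lt_d2 (by norm_num)
  have hs1 : Real.sin β ≤ β := (Real.sin_lt h0).le
  have hs2 : Real.sin (2 * β) ≤ 2 * β := (Real.sin_lt (by linarith)).le
  have htan : β / 2 ≤ Real.tan (β / 2) := (Real.lt_tan (by linarith) (by linarith)).le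
  have htan0 : 0 ≤ Real.tan (β / 2) := le_trans (by linarith) htan
  have htan1 : Real.tan (β / 2) ≤ 1 := by
    rw [← Real.tan_pi_div_four]
    exact Real.strictMonoOn_tan.monotoneOn ⟨by linarith, by linarith⟩
      ⟨by linarith, by linarith⟩ (by linarith)
  have hA : 2 * Real.sin β + Real.sin (2 * β) ≤ 4 * β := by linarith
  have hA0 : 0 ≤ 2 * Real.sin β + Real.sin (2 * β) := by
    have h2 : 0 ≤ Real.sin β := Real.sin_nonneg_of_nonneg_of_le_pi h0.le (by linarith)
    have h3 : 0 ≤ Real.sin (2 * β) :=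
      Real.sin_nonneg_of_nonneg_of_le_pi (by linarith) (by linarith)
    linarith
  have hB : (Real.pi - 2 * β) / 4 + (1 / 3) * Real.tan (β / 2) ^ 3 + Real.tan (β / 2) ≤ 3 := by
    nlinarith [pow_le_one₀ htan0 htan1 (n := 3)]
  calc Cconst β ≤ (4 * β) * 3 := by
        apply mul_le_mul hA hB _ (by positivity)
        nlinarith [pow_nonneg htan0 3]
    _ = 12 * β := by ring

/-- IVT step: for any target value `0 < t' < Cconst b`, there is `b' ∈ (0, b)`
with `Cconst b' = t'`. -/
lemma key {b t' : ℝ} (hb0 : 0 < b) (hb1 : b ≤ Real.pi / 2) (ht'0 : 0 < t')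
    (ht' : t' < Cconst b) : ∃ b', 0 < b' ∧ b' < b ∧ Cconst b' = t' := by
  set x := min (b / 2) (t' / 24) with hx
  have hx0 : 0 < x := lt_min (by linarith) (by linarith)
  have hxb : x < b := lt_of_le_of_lt (min_le_left _ _) (by linarith)
  have hfx : Cconst x < t' := by
    have h1 := upperC hx0 (le_trans hxb.le hb1)
    have h2 : x ≤ t' / 24 := min_le_right _ _
    linarith
  have hcont : ContinuousOn Cconst (Set.Icc x b) := fun y hy =>
    (contC (le_trans hx0.le hy.1) (le_trans hy.2 hb1)).continuousWithinAt
  have hsub := intermediate_value_Ioo hxb.le hcont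
  obtain ⟨b', hb', hfb'⟩ := hsub ⟨hfx, ht'⟩
  exact ⟨b', lt_trans hx0 hb'.1, hb'.2, hfb'⟩

end Stmt9Aux

theorem stmt9 :
    ∃ (β : ℕ → ℝ) (m : ℕ → ℕ), StrictAnti β ∧
      (∀ j, β j ∈ Set.Ioo (0 : ℝ) (Real.pi / 2)) ∧
      Tendsto β atTop (nhds 0) ∧ StrictMono m ∧ (∀ j, 3 ≤ m j) ∧
      ∀ j, Cconst (β j) = 2 - 2 * Real.cos (Real.pi / (m j : ℝ)) := by
  have hpi := Real.pi_pos
  -- the target values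
  set t : ℕ → ℝ := fun j => 2 - 2 * Real.cos (Real.pi / ((j : ℝ) + 3)) with ht
  have hden : ∀ j : ℕ, (0 : ℝ) < (j : ℝ) + 3 := fun j => by positivity
  have harg0 : ∀ j : ℕ, (0 : ℝ) < Real.pi / ((j : ℝ) + 3) := fun j => by positivity
  have harg1 : ∀ j : ℕ, Real.pi / ((j : ℝ) + 3) ≤ Real.pi / 3 := fun j => by
    apply div_le_div_of_nonneg_left hpi.le (by norm_num)
    have : (0 : ℝ) ≤ (j : ℝ) := Nat.cast_nonneg j
    linarith
  have ht0 : ∀ j, 0 < t j := by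
    intro j
    have h1 : Real.cos (Real.pi / ((j : ℝ) + 3)) < Real.cos 0 :=
      Real.cos_lt_cos_of_nonneg_of_le_pi le_rfl (le_trans (harg1 j) (by linarith)) (harg0 j)
    rw [Real.cos_zero] at h1
    simp only [ht]
    linarith
  have htmono : ∀ j : ℕ, t (j + 1) < t j := by
    intro j
    have hlt : Real.pi / ((j : ℝ) + 1 + 3) < Real.pi / ((j : ℝ) + 3) := by
      apply div_lt_div_of_pos_left hpi (hden j)
      linarith
    have h1 : Real.cos (Real.pi / ((j : ℝ) + 3)) < Real.cos (Real.pi / ((j : ℝ) + 1 + 3)) :=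
      Real.cos_lt_cos_of_nonneg_of_le_pi (by positivity)
        (le_trans (harg1 j) (by linarith)) hlt
    simp only [ht]
    push_cast
    linarith
  -- the invariant
  set Inv : ℕ → ℝ → Prop := fun j b => 0 < b ∧ b < Real.pi / 2 ∧ Cconst b = t j with hInv
  -- base case
  have hCpi2 : Cconst (Real.pi / 2) = 8 / 3 := by
    unfold Cconst
    rw [show (2 : ℝ) * (Real.pi / 2) = Real.pi by ring, Real.sin_pi,
      show Real.pi / 2 / 2 = Real.pi / 4 by ring, Real.tan_pi_div_four,
      Real.sin_pi_div_two]
    ring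
  have ht03 : t 0 = 1 := by
    simp only [ht]
    norm_num [Real.cos_pi_div_three]
  have base : ∃ b, Inv 0 b := by
    obtain ⟨b, hb0, hb1, hbe⟩ := Stmt9Aux.key (b := Real.pi / 2) (t' := t 0)
      (by positivity) le_rfl (ht0 0) (by rw [hCpi2, ht03]; norm_num)
    exact ⟨b, hb0, hb1, hbe⟩
  -- inductive step
  have step : ∀ j b, Inv j b → ∃ b', b' < b ∧ Inv (j + 1) b' := by
    intro j b ⟨hb0, hb1, hbe⟩
    obtain ⟨b', hb'0, hb'b, hb'e⟩ := Stmt9Aux.key (b := b) (t' := t (j + 1)) hb0 hb1.le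
      (ht0 (j + 1)) (by rw [hbe]; exact htmono j)
    exact ⟨b', hb'b, hb'0, lt_trans hb'b hb1, hb'e⟩
  choose F hF1 hF2 using step
  obtain ⟨b0, hb0⟩ := base
  -- build the sequence by recursion
  let f : ∀ j : ℕ, {b : ℝ // Inv j b} := fun j =>
    Nat.rec ⟨b0, hb0⟩ (fun j ih => ⟨F j ih.1 ih.2, hF2 j ih.1 ih.2⟩) j
  refine ⟨fun j => (f j).1, fun j => j + 3, ?_, ?_, ?_, ?_, ?_, ?_⟩
  · -- StrictAnti
    apply strictAnti_nat_of_succ_lt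
    intro j
    exact hF1 j (f j).1 (f j).2
  · -- membership
    intro j
    exact ⟨(f j).2.1, (f j).2.2.1⟩
  · -- tendsto 0
    have hbound : ∀ j : ℕ, (f j).1 ≤ Real.pi ^ 2 / ((j : ℝ) + 3) := by
      intro j
      obtain ⟨h1, h2, h3⟩ := (f j).2
      have hle : (f j).1 ≤ t j := by
        have := Stmt9Aux.lowerC h1 h2.le
        rw [h3] at this; exact this
      have hcos : 1 - (Real.pi / ((j : ℝ) + 3)) ^ 2 / 2 ≤ Real.cos (Real.pi / ((j : ℝ) + 3)) :=
        Real.one_sub_sq_div_two_le_cos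
      have h4 : t j ≤ (Real.pi / ((j : ℝ) + 3)) ^ 2 := by simp only [ht]; linarith
      have h5 : (Real.pi / ((j : ℝ) + 3)) ^ 2 ≤ Real.pi ^ 2 / ((j : ℝ) + 3) := by
        rw [div_pow]
        apply div_le_div_of_nonneg_left (by positivity) (hden j)
        nlinarith [hden j, Nat.cast_nonneg (α := ℝ) j]
      exact le_trans hle (le_trans h4 h5)
    have hg : Tendsto (fun j : ℕ => Real.pi ^ 2 / ((j : ℝ) + 3)) atTop (nhds 0) :=
      Tendsto.div_atTop tendsto_const_nhds
        (tendsto_atTop_add_const_right _ 3 tendsto_natCast_atTop_atTop)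
    exact squeeze_zero (fun j => ((f j).2.1).le) hbound hg
  · -- StrictMono m
    intro a b h
    simpa using Nat.add_lt_add_right h 3
  · intro j
    exact Nat.le_add_left 3 j
  · intro j
    have := (f j).2.2.2
    rw [this]
    simp only [ht]
    push_cast
    ring_nf
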